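/- Let N ≥ 1 be an integer, 1 ≤ p < ∞, ψ₀(x) = max(min(2−2|x|,1),0), and Ψ_n^{4N} c = (ψ₀((j−n)/(4N))·c(j))_{j∈ℤ}. Then for all c ∈ ℓ^p(ℤ), 4^{1/p} ‖c‖_p ≤ ( Σ_{n ∈ Nℤ} ‖Ψ_n^{4N} c‖_p^p )^{1/p} ≤ (5 + 2^{1−p})^{1/p} ‖c‖_p. -/

import Mathlib

open MeasureTheory ENNReal Filter

noncomputable def lpNorm (p : ℝ≥0∞) (c : ℤ → ℂ) : ℝ≥0∞ :=
  eLpNorm c p Measure.count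

noncomputable def rowSup (a : ℤ → ℤ → ℂ) (k : ℤ) : ℝ≥0∞ :=
  ⨆ j : ℤ, (‖a j (j - k)‖₊ : ℝ≥0∞)

noncomputable def normC (a : ℤ → ℤ → ℂ) : ℝ≥0∞ := ∑' k : ℤ, rowSup a k

noncomputable def matMul (a : ℤ → ℤ → ℂ) (c : ℤ → ℂ) : ℤ → ℂ :=
  fun j => ∑' j' : ℤ, a j j' * c j'

noncomputable def trunc (a : ℤ → ℤ → ℂ) (s : ℕ) : ℤ → ℤ → ℂ :=
  fun i j => if |i - j| < (s : ℤ) then a i j else 0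

noncomputable def chiProj (y : ℤ) (N : ℕ) (c : ℤ → ℂ) : ℤ → ℂ :=
  fun j => if |j - y| < (N : ℤ) then c j else 0

noncomputable def psi0 (x : ℝ) : ℝ := max (min (2 - 2 * |x|) 1) 0

noncomputable def Psi (n : ℤ) (N : ℕ) (c : ℤ → ℂ) : ℤ → ℂ :=
  fun j => (psi0 (((j - n : ℤ) : ℝ) / (N : ℝ)) : ℂ) * c j

/-!
Interchanging the sums gives `∑ₘ ‖Ψ_{Nm}^{4N} c‖_p^p = ∑ⱼ W(j) |c j|^p` with the weight
`W(j) = ∑ₘ ψ₀((j - Nm)/(4N))^p`, so it suffices to bound `W` pointwise. Writing `j = N m₀ + r`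
with `0 ≤ r < N` and `u = r/(2N) ∈ [0, 1/2)`, the argument of `ψ₀` at `m = m₀ + k` is `u/2 - k/4`:
only `k ∈ [-3, 4]` contribute, four of these terms equal `1` and the others are
`u^p, (1/2 - u)^p, (1/2 + u)^p, (1 - u)^p`. The pairs `u, 1/2 - u` and `1/2 + u, 1 - u` have
constant sums, so convexity of `x ↦ x^p` bounds each pair by its values at the endpoints:
`4 ≤ W(j) ≤ 4 + 1 + 2 · 2^{-p}`.
-/

open Set

lemma ConvexOn.add_le_add_of_add_eq {s : Set ℝ} {f : ℝ → ℝ} (hf : ConvexOn ℝ s f)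
    {a b x y : ℝ} (ha : a ∈ s) (hb : b ∈ s) (hx : x ∈ Icc a b) (hxy : x + y = a + b) :
    f x + f y ≤ f a + f b := by
  obtain ⟨hax, hxb⟩ := hx
  rcases hax.eq_or_lt with rfl | hax
  · obtain rfl : y = b := by linarith
    rfl
  set t := (b - x) / (b - a)
  have hab : 0 < b - a := by linarith
  have ht0 : 0 ≤ t := div_nonneg (by linarith) hab.le
  have ht1 : 0 ≤ 1 - t := by rw [sub_nonneg, div_le_one hab]; linarith
  have hx : t • a + (1 - t) • b = x := by
    simp only [smul_eq_mul, t]; field_simp; ring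
  have hy : (1 - t) • a + t • b = y := by
    rw [show y = a + b - x by linarith]; simp only [smul_eq_mul, t]; field_simp; ring
  have h₁ := hf.2 ha hb ht0 ht1 (by ring)
  have h₂ := hf.2 ha hb ht1 ht0 (by ring)
  rw [hx] at h₁
  rw [hy] at h₂
  simp only [smul_eq_mul] at h₁ h₂
  linarith

lemma Real.rpow_add_rpow_le_of_add_eq {q u v a b : ℝ} (hq : 1 ≤ q) (ha : 0 ≤ a)
    (hu : u ∈ Icc a b) (huv : u + v = a + b) : u ^ q + v ^ q ≤ a ^ q + b ^ q :=
  (convexOn_rpow hq).add_le_add_of_add_eq ha (ha.trans (hu.1.trans hu.2)) hu huv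

lemma psi0_nonneg (x : ℝ) : 0 ≤ psi0 x := le_max_right _ _

lemma psi0_eq_zero {x : ℝ} (h : 1 ≤ |x|) : psi0 x = 0 :=
  max_eq_right ((min_le_left _ _).trans (by linarith))

lemma psi0_eq_one {x : ℝ} (h : |x| ≤ 1 / 2) : psi0 x = 1 := by
  rw [psi0, min_eq_right (by linarith), max_eq_left zero_le_one]

lemma psi0_eq_two_sub {x : ℝ} (h₁ : 1 / 2 ≤ x) (h₂ : x ≤ 1) : psi0 x = 2 - 2 * x := by
  rw [psi0, abs_of_nonneg (by linarith), min_eq_left (by linarith), max_eq_left (by linarith)]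

lemma psi0_eq_two_add {x : ℝ} (h₁ : -1 ≤ x) (h₂ : x ≤ -(1 / 2)) : psi0 x = 2 + 2 * x := by
  rw [psi0, abs_of_nonpos (by linarith), min_eq_left (by linarith), max_eq_left (by linarith)]
  ring

lemma sum_Icc_psi0_rpow_eq {u : ℝ} (q : ℝ) (hu₀ : 0 ≤ u) (hu : u ≤ 1 / 2) :
    ∑ k ∈ Finset.Icc (-3 : ℤ) 4, psi0 (u / 2 - k / 4) ^ q
      = 4 + ((u ^ q + (1 / 2 - u) ^ q) + ((1 / 2 + u) ^ q + (1 - u) ^ q)) := by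
  rw [show Finset.Icc (-3 : ℤ) 4 = {-3, -2, -1, 0, 1, 2, 3, 4} from rfl]
  rw [Finset.sum_insert (by decide), Finset.sum_insert (by decide), Finset.sum_insert (by decide),
    Finset.sum_insert (by decide), Finset.sum_insert (by decide), Finset.sum_insert (by decide),
    Finset.sum_insert (by decide), Finset.sum_singleton]
  norm_num only [Int.cast_neg, Int.cast_ofNat, Int.cast_one, Int.cast_zero, sub_neg_eq_add]
  have plateau : ∀ x : ℝ, |x| ≤ 1 / 2 → psi0 x ^ q = 1 := fun x hx => by
    rw [psi0_eq_one hx, Real.one_rpow]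
  have e₁ : psi0 (u / 2 + 3 / 4) = 1 / 2 - u := by
    rw [psi0_eq_two_sub (by linarith) (by linarith)]; ring
  have e₂ : psi0 (u / 2 + 1 / 2) = 1 - u := by
    rw [psi0_eq_two_sub (by linarith) (by linarith)]; ring
  have e₃ : psi0 (u / 2 - 3 / 4) = 1 / 2 + u := by
    rw [psi0_eq_two_add (by linarith) (by linarith)]; ring
  have e₄ : psi0 (u / 2 - 1) = u := by
    rw [psi0_eq_two_add (by linarith) (by linarith)]; ring
  rw [e₁, e₂, e₃, e₄, plateau _ (abs_le.2 ⟨by linarith, by linarith⟩),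
    plateau _ (abs_le.2 ⟨by linarith, by linarith⟩), plateau _ (abs_le.2 ⟨by linarith, by linarith⟩),
    plateau _ (abs_le.2 ⟨by linarith, by linarith⟩)]
  ring

lemma sum_Icc_psi0_rpow_bounds {q u : ℝ} (hq : 1 ≤ q) (hu₀ : 0 ≤ u) (hu : u ≤ 1 / 2) :
    4 ≤ ∑ k ∈ Finset.Icc (-3 : ℤ) 4, psi0 (u / 2 - k / 4) ^ q ∧
      ∑ k ∈ Finset.Icc (-3 : ℤ) 4, psi0 (u / 2 - k / 4) ^ q ≤ 5 + 2 ^ (1 - q) := by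
  rw [sum_Icc_psi0_rpow_eq q hu₀ hu]
  have h₁ : u ^ q + (1 / 2 - u) ^ q ≤ 0 ^ q + (1 / 2) ^ q :=
    Real.rpow_add_rpow_le_of_add_eq hq le_rfl ⟨hu₀, hu⟩ (by ring)
  have h₂ : (1 / 2 + u) ^ q + (1 - u) ^ q ≤ (1 / 2) ^ q + 1 ^ q :=
    Real.rpow_add_rpow_le_of_add_eq hq (by norm_num) ⟨by linarith, by linarith⟩ (by ring)
  have h₂' : (2 : ℝ) ^ (1 - q) = 2 * (1 / 2) ^ q := by
    rw [Real.rpow_sub two_pos, Real.rpow_one, Real.div_rpow zero_le_one zero_le_two,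
      Real.one_rpow]
    ring
  rw [Real.zero_rpow (by linarith)] at h₁
  rw [Real.one_rpow] at h₂
  constructor
  · linarith [Real.rpow_nonneg hu₀ q, Real.rpow_nonneg (by linarith : (0 : ℝ) ≤ 1 / 2 - u) q,
      Real.rpow_nonneg (by linarith : (0 : ℝ) ≤ 1 / 2 + u) q,
      Real.rpow_nonneg (by linarith : (0 : ℝ) ≤ 1 - u) q]
  · linarith

lemma tsum_ofReal_psi0_rpow_eq {q u : ℝ} (hq : 0 < q) (hu₀ : 0 ≤ u) (hu : u ≤ 1 / 2) :
    ∑' k : ℤ, ENNReal.ofReal (psi0 (u / 2 - k / 4)) ^ q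
      = ENNReal.ofReal (∑ k ∈ Finset.Icc (-3 : ℤ) 4, psi0 (u / 2 - k / 4) ^ q) := by
  rw [tsum_eq_sum (s := Finset.Icc (-3 : ℤ) 4), ENNReal.ofReal_sum_of_nonneg
    fun k _ => Real.rpow_nonneg (psi0_nonneg _) q]
  · exact Finset.sum_congr rfl fun k _ => ofReal_rpow_of_nonneg (psi0_nonneg _) hq.le
  · intro k hk
    have hk' : k ≤ -4 ∨ 5 ≤ k := by rw [Finset.mem_Icc] at hk; omega
    have h : 1 ≤ |u / 2 - k / 4| := by
      rcases hk' with hk' | hk'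
      · have : (k : ℝ) ≤ -4 := by exact_mod_cast hk'
        exact le_abs.2 (Or.inl (by linarith))
      · have : (5 : ℝ) ≤ k := by exact_mod_cast hk'
        exact le_abs.2 (Or.inr (by linarith))
    rw [psi0_eq_zero h, ofReal_zero, zero_rpow_of_pos hq]

noncomputable def psiWeight (q : ℝ) (N M : ℕ) (j : ℤ) : ℝ≥0∞ :=
  ∑' m : ℤ, ENNReal.ofReal (psi0 (((j - N * m : ℤ) : ℝ) / (M : ℝ))) ^ q

lemma psiWeight_eq_tsum_psi0 (q : ℝ) {N : ℕ} (hN : 0 < N) (j : ℤ) :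
    psiWeight q N (4 * N) j
      = ∑' k : ℤ, ENNReal.ofReal (psi0 (((j % N : ℤ) : ℝ) / (2 * N) / 2 - k / 4)) ^ q := by
  rw [psiWeight, ← (Equiv.addLeft (j / N)).tsum_eq]
  refine tsum_congr fun k => ?_
  have hj : j - N * (j / N + k) = j % N - N * k := by linarith [Int.emod_add_mul_ediv j N]
  have hN' : (N : ℝ) ≠ 0 := by positivity
  simp only [Equiv.coe_addLeft, hj]
  push_cast
  field_simp
  ring_nf

lemma psiWeight_bounds {q : ℝ} (hq : 1 ≤ q) {N : ℕ} (hN : 0 < N) (j : ℤ) :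
    4 ≤ psiWeight q N (4 * N) j ∧ psiWeight q N (4 * N) j ≤ 5 + 2 ^ (1 - q) := by
  set u : ℝ := ((j % N : ℤ) : ℝ) / (2 * N)
  have hN' : (0 : ℝ) < N := by exact_mod_cast hN
  have hu₀ : 0 ≤ u := div_nonneg (by exact_mod_cast Int.emod_nonneg j (by omega)) (by positivity)
  have hu : u ≤ 1 / 2 := by
    have : ((j % N : ℤ) : ℝ) ≤ N := by exact_mod_cast (Int.emod_lt_of_pos j (by omega)).le
    rw [div_le_iff₀ (by positivity)]; linarith
  rw [psiWeight_eq_tsum_psi0 q hN, tsum_ofReal_psi0_rpow_eq (by linarith) hu₀ hu]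
  obtain ⟨h₁, h₂⟩ := sum_Icc_psi0_rpow_bounds hq hu₀ hu
  refine ⟨by simpa using ENNReal.ofReal_le_ofReal h₁, (ENNReal.ofReal_le_ofReal h₂).trans_eq ?_⟩
  rw [ENNReal.ofReal_add (by norm_num) (by positivity), ← ofReal_rpow_of_pos two_pos]
  norm_num

lemma lpNorm_rpow_toReal {p : ℝ≥0∞} (hp₀ : p ≠ 0) (hp : p ≠ ⊤) (f : ℤ → ℂ) :
    lpNorm p f ^ p.toReal = ∑' j, ‖f j‖ₑ ^ p.toReal := by
  rw [_root_.lpNorm, eLpNorm_eq_lintegral_rpow_enorm_toReal hp₀ hp, lintegral_count, one_div,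
    ENNReal.rpow_inv_rpow (ENNReal.toReal_ne_zero.2 ⟨hp₀, hp⟩)]

lemma enorm_Psi (n : ℤ) (M : ℕ) (c : ℤ → ℂ) (j : ℤ) :
    ‖Psi n M c j‖ₑ = ENNReal.ofReal (psi0 (((j - n : ℤ) : ℝ) / M)) * ‖c j‖ₑ := by
  rw [Psi, enorm_mul, ← ofReal_norm, Complex.norm_real, Real.norm_of_nonneg (psi0_nonneg _)]

lemma tsum_lpNorm_Psi_rpow {p : ℝ≥0∞} (hp₀ : p ≠ 0) (hp : p ≠ ⊤) (N M : ℕ) (c : ℤ → ℂ) :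
    ∑' m : ℤ, lpNorm p (Psi (N * m) M c) ^ p.toReal
      = ∑' j : ℤ, psiWeight p.toReal N M j * ‖c j‖ₑ ^ p.toReal := by
  simp only [lpNorm_rpow_toReal hp₀ hp, enorm_Psi,
    ENNReal.mul_rpow_of_nonneg _ _ ENNReal.toReal_nonneg, psiWeight, ← ENNReal.tsum_mul_right]
  exact ENNReal.tsum_comm

theorem stmt7_general (p : ℝ≥0∞) (hp : 1 ≤ p) (hp' : p ≠ ⊤) (N : ℕ) (hN : 1 ≤ N)
    (c : ℤ → ℂ) :
    (4 : ℝ≥0∞) ^ (1 / p.toReal) * lpNorm p c ≤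
      (∑' m : ℤ, (lpNorm p (Psi ((N : ℤ) * m) (4 * N) c)) ^ p.toReal) ^ (1 / p.toReal) ∧
    (∑' m : ℤ, (lpNorm p (Psi ((N : ℤ) * m) (4 * N) c)) ^ p.toReal) ^ (1 / p.toReal) ≤
      ((5 : ℝ≥0∞) + (2 : ℝ≥0∞) ^ (1 - p.toReal)) ^ (1 / p.toReal) * lpNorm p c := by
  have hp₀ : p ≠ 0 := (zero_lt_one.trans_le hp).ne'
  have hq : 1 ≤ p.toReal := by simpa using ENNReal.toReal_mono hp' hp
  have hq₀ : 0 < p.toReal := zero_lt_one.trans_le hq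
  have hweight := psiWeight_bounds hq (N := N) hN
  rw [tsum_lpNorm_Psi_rpow hp₀ hp', one_div]
  constructor
  · rw [ENNReal.le_rpow_inv_iff hq₀, ENNReal.mul_rpow_of_nonneg _ _ hq₀.le,
      ENNReal.rpow_inv_rpow hq₀.ne', lpNorm_rpow_toReal hp₀ hp', ← ENNReal.tsum_mul_left]
    exact ENNReal.tsum_le_tsum fun j => mul_le_mul_left (hweight j).1 _
  · rw [ENNReal.rpow_inv_le_iff hq₀, ENNReal.mul_rpow_of_nonneg _ _ hq₀.le,
      ENNReal.rpow_inv_rpow hq₀.ne', lpNorm_rpow_toReal hp₀ hp', ← ENNReal.tsum_mul_left]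
    exact ENNReal.tsum_le_tsum fun j => mul_le_mul_left (hweight j).2 _

theorem stmt7 (p : ℝ≥0∞) (hp : 1 ≤ p) (hp' : p ≠ ⊤) (N : ℕ) (hN : 1 ≤ N)
    (c : ℤ → ℂ) (hc : lpNorm p c < ⊤) :
    (4 : ℝ≥0∞) ^ (1 / p.toReal) * lpNorm p c ≤
      (∑' m : ℤ, (lpNorm p (Psi ((N : ℤ) * m) (4 * N) c)) ^ p.toReal) ^ (1 / p.toReal) ∧
    (∑' m : ℤ, (lpNorm p (Psi ((N : ℤ) * m) (4 * N) c)) ^ p.toReal) ^ (1 / p.toReal) ≤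
      ((5 : ℝ≥0∞) + (2 : ℝ≥0∞) ^ (1 - p.toReal)) ^ (1 / p.toReal) * lpNorm p c :=
  stmt7_general p hp hp' N hN c
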